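/- If A = A1 ∪ A2 is a separable γ-set of a finite simple graph G, with A1, A2 nonempty disjoint sets such that A1 dominates V(G) − A, then A2 is a 2-packing of G, i.e., the closed neighborhoods of any two distinct vertices of A2 are disjoint. -/

import Mathlib

open SimpleGraph

variable {V : Type*}

/-- `D` is a dominating set of `G`: every vertex is in `D` or adjacent to a vertex of `D`. -/
def IsDomSet (G : SimpleGraph V) (D : Set V) : Prop :=
  ∀ v : V, ∃ d ∈ D, d = v ∨ G.Adj d v

/-- The domination number of `G`: minimum cardinality of a dominating set. -/
noncomputable def domNum (G : SimpleGraph V) : ℕ :=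
  sInf {n | ∃ D : Set V, IsDomSet G D ∧ D.ncard = n}

/-- The prism `πG` of `G`: two disjoint copies of `G` together with the matching
`{u (π u) : u ∈ V(G)}`, the second copy playing the role of `G'`. -/
def prism (G : SimpleGraph V) (π : Equiv.Perm V) : SimpleGraph (V ⊕ V) where
  Adj a b :=
    match a, b with
    | Sum.inl u, Sum.inl v => G.Adj u v
    | Sum.inr u, Sum.inr v => G.Adj u v
    | Sum.inl u, Sum.inr v => π u = v
    | Sum.inr u, Sum.inl v => π v = u
  symm := by
    constructor
    rintro (u | u) (v | v) h
    · exact G.symm.symm _ _ h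
    · exact h
    · exact h
    · exact G.symm.symm _ _ h
  loopless := by
    constructor
    rintro (u | u) h
    · exact G.loopless.irrefl u h
    · exact G.loopless.irrefl u h

/-- The closed neighborhood `N[v]` of a vertex. -/
def closedNbhd (G : SimpleGraph V) (v : V) : Set V :=
  insert v (G.neighborSet v)

/-- `x` is a `C₃`-free vertex: non-isolated and belonging to no triangle of `G`. -/
def C3Free (G : SimpleGraph V) (x : V) : Prop :=
  (∃ y, G.Adj x y) ∧ ∀ u v : V, G.Adj x u → G.Adj x v → ¬ G.Adj u v

/-- `A = A1 ∪ A2` is a separable γ-set of `G` (an `A1`-γ-set): `A1, A2` are nonempty,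
disjoint, `A` is a γ-set, and `A1` dominates `V(G) - A`. -/
def SepGammaSet (G : SimpleGraph V) (A1 A2 : Set V) : Prop :=
  A1.Nonempty ∧ A2.Nonempty ∧ Disjoint A1 A2 ∧
  IsDomSet G (A1 ∪ A2) ∧ (A1 ∪ A2).ncard = domNum G ∧
  ∀ v ∉ A1 ∪ A2, ∃ u ∈ A1, G.Adj u v

/-- The separable γ-set `A = A1 ∪ A2` is effective under `π`: `π(A)` is a γ-set of the
copy `G'` of `G` (identified with `G`) whose dominating part is `B2' = π(A2)`,
i.e. `π(A2)` dominates `V(G') - π(A)`. -/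
def Effective (G : SimpleGraph V) (π : Equiv.Perm V) (A1 A2 : Set V) : Prop :=
  IsDomSet G (⇑π '' (A1 ∪ A2)) ∧ (⇑π '' (A1 ∪ A2)).ncard = domNum G ∧
  ∀ v ∉ ⇑π '' (A1 ∪ A2), ∃ u ∈ ⇑π '' A2, G.Adj u v

/-- The star `K_{1,m}` on `Fin (m+1)`, with center `0` adjacent to the `m` leaves. -/
def starGraph (m : ℕ) : SimpleGraph (Fin (m + 1)) where
  Adj a b := (a = 0 ∧ b ≠ 0) ∨ (b = 0 ∧ a ≠ 0)
  symm := ⟨fun a b h => Or.symm h⟩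
  loopless := ⟨fun a h => by rcases h with ⟨h1, h2⟩ | ⟨h1, h2⟩ <;> exact h2 h1⟩

/- If two vertices `u ≠ v` of `A2` had a common vertex `w` in their closed neighbourhoods, then
`(A \ {u, v}) ∪ {w}` would still dominate `G`: `w` covers `u` and `v`, and every vertex outside
`A` keeps its neighbour in `A1`. This set is smaller than the γ-set `A`, a contradiction. -/

theorem mem_closedNbhd_iff {G : SimpleGraph V} {v w : V} :
    w ∈ closedNbhd G v ↔ w = v ∨ G.Adj w v := by
  rw [closedNbhd, Set.mem_insert_iff, mem_neighborSet, G.adj_comm]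

theorem domNum_le_ncard {G : SimpleGraph V} {D : Set V} (hD : IsDomSet G D) :
    domNum G ≤ D.ncard :=
  Nat.sInf_le ⟨D, hD, rfl⟩

theorem isDomSet_insert_diff_pair {G : SimpleGraph V} {A A1 : Set V} {u v w : V}
    (hA1A : A1 ⊆ A) (hA1 : ∀ x ∉ A, ∃ d ∈ A1, G.Adj d x) (hu : u ∉ A1) (hv : v ∉ A1)
    (hwu : w ∈ closedNbhd G u) (hwv : w ∈ closedNbhd G v) :
    IsDomSet G (insert w (A \ {u, v})) := by
  intro x
  by_cases hxuv : x = u ∨ x = v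
  · refine ⟨w, Set.mem_insert _ _, ?_⟩
    rcases hxuv with rfl | rfl
    · exact mem_closedNbhd_iff.mp hwu
    · exact mem_closedNbhd_iff.mp hwv
  by_cases hxA : x ∈ A
  · exact ⟨x, Set.mem_insert_of_mem _ ⟨hxA, by simpa using hxuv⟩, Or.inl rfl⟩
  obtain ⟨d, hdA1, hdx⟩ := hA1 x hxA
  have hd_ne : d ∉ ({u, v} : Set V) := by
    rintro (rfl | rfl)
    · exact hu hdA1
    · exact hv hdA1
  exact ⟨d, Set.mem_insert_of_mem _ ⟨hA1A hdA1, hd_ne⟩, Or.inr hdx⟩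

theorem ncard_insert_diff_pair_lt {α : Type*} {A : Set α} (hA : A.Finite) {u v : α}
    (hu : u ∈ A) (hv : v ∈ A) (huv : u ≠ v) (w : α) :
    (insert w (A \ {u, v})).ncard < A.ncard := by
  have hpair : ({u, v} : Set α) ⊆ A := Set.pair_subset hu hv
  have hdiff : (A \ {u, v}).ncard = A.ncard - 2 := by
    rw [Set.ncard_sdiff hpair (hA.subset hpair), Set.ncard_pair huv]
  have htwo : 2 ≤ A.ncard := Set.ncard_pair huv ▸ Set.ncard_le_ncard hpair hA
  have := Set.ncard_insert_le w (A \ {u, v})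
  omega

/-- in a separable γ-set `A = A1 ∪ A2`, the set `A2` is a 2-packing of `G`. -/
theorem sep_gamma_set_A2_packing [Fintype V] (G : SimpleGraph V) (A1 A2 : Set V)
    (h : SepGammaSet G A1 A2) :
    ∀ u ∈ A2, ∀ v ∈ A2, u ≠ v → closedNbhd G u ∩ closedNbhd G v = ∅ := by
  obtain ⟨-, -, hdisj, -, hcard, hsep⟩ := h
  intro u hu v hv huv
  refine Set.eq_empty_iff_forall_notMem.mpr fun w ⟨hwu, hwv⟩ => ?_
  have hsmall := domNum_le_ncard <| isDomSet_insert_diff_pair Set.subset_union_left hsep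
    (hdisj.notMem_of_mem_right hu) (hdisj.notMem_of_mem_right hv) hwu hwv
  have hlt := ncard_insert_diff_pair_lt (Set.toFinite (A1 ∪ A2))
    (Or.inr hu) (Or.inr hv) huv w
  omega
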